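/- arXiv:1404.6718 — 3 statements merged into one kernel-verified Lean document; each statement's English description precedes it below -/
import Mathlib

section
/- Let r ∈ ℂ, λ ∈ ℂ*, and suppose f is a holomorphic function on a neighbourhood of the closed lower half-plane minus {∞} in ℂ, satisfying f(t+1) = λ·f(t), and such that (i - t)^(2-r)·f(t) admits the asymptotic expansion ∑_{n ≥ k} b_n t^(-n) (for some k ∈ ℤ) both as t → +∞ and as t → -∞ along ℝ, with the same coefficients b_n. Then: (a) if λ = 1 and r ∈ ℤ with r ≥ k + 2, then f is a constant function; (b) in all other cases f = 0. -/
/-! Restrict to the real line, put `g x = (I - x) ^ (2 - r) * f x` and let `b N` be the first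
nonzero coefficient, so that `x ^ N * g x → b N` as `x → ±∞`. Since `arg (I - x)` tends to `π`
at `+∞` and to `0` at `-∞`, this says that `‖f x‖ * |x| ^ (N + 2 - re r)` tends to
`‖b N‖ * exp (-π * im r)` at `+∞` and to `‖b N‖` at `-∞`. Comparing these limits along `n` and
`-n`, where `‖f (±n)‖ = |λ| ^ (±n) * ‖f 0‖`, forces `|λ| = 1`, `im r = 0` and `r = N + 2`. Then
`f x = ((I - x) / x) ^ N * x ^ N * g x → (-1) ^ N * b N`, so `f (x + 1) = λ * f x` gives `λ = 1`
and `f` is constant. If all `b n` vanish, `f` decays at both ends, which periodicity only allows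
for `f = 0`. The identity theorem carries both conclusions from `ℝ` to the half-plane. -/

open Complex Filter Topology

theorem apply_add_natCast_eq_pow_mul {R M : Type*} [AddMonoidWithOne R] [Monoid M] {φ : R → M}
    {c : M} (h : ∀ x, φ (x + 1) = c * φ x) (x : R) (n : ℕ) : φ (x + n) = c ^ n * φ x := by
  induction n with
  | zero => simp
  | succ n ih => rw [Nat.cast_succ, ← add_assoc, h, ih, pow_succ', mul_assoc]

theorem eq_one_of_tendsto_of_comp_eq_mul {α 𝕜 : Type*} [NormedField 𝕜] {l : Filter α} [l.NeBot]
    {φ : α → 𝕜} {σ : α → α} {c ℓ : 𝕜} (hφ : Tendsto φ l (𝓝 ℓ)) (hℓ : ℓ ≠ 0)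
    (hσ : Tendsto σ l l) (h : ∀ a, φ (σ a) = c * φ a) : c = 1 := by
  have hcomp : Tendsto (fun a => c * φ a) l (𝓝 ℓ) := by
    simpa only [Function.comp_def, h] using hφ.comp hσ
  exact (mul_eq_right₀ hℓ).1 (tendsto_nhds_unique (hφ.const_mul c) hcomp)

theorem eq_zero_of_tendsto_cocompact {𝕜 : Type*} [NormedField 𝕜] {φ : ℝ → 𝕜} {c : 𝕜}
    (h : ∀ x, φ (x + 1) = c * φ x) (hφ : Tendsto φ (cocompact ℝ) (𝓝 0)) (x : ℝ) : φ x = 0 := by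
  have hn : Tendsto (fun n : ℕ => (n : ℝ)) atTop atTop := tendsto_natCast_atTop_atTop
  have hlim : ∀ {u : ℕ → ℝ}, Tendsto u atTop (cocompact ℝ) →
      Tendsto (fun n => ‖φ (u n)‖) atTop (𝓝 0) := fun hu => by
    simpa using (hφ.comp hu).norm
  rw [← norm_le_zero_iff]
  rcases le_total 1 ‖c‖ with hc | hc
  · refine ge_of_tendsto (hlim ((tendsto_atTop_add_const_left _ x hn).mono_right
      atTop_le_cocompact)) (Eventually.of_forall fun n => ?_)
    rw [apply_add_natCast_eq_pow_mul h, norm_mul, norm_pow]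
    exact le_mul_of_one_le_left (norm_nonneg _) (one_le_pow₀ hc)
  · refine ge_of_tendsto (hlim ((tendsto_atBot_add_const_left _ x
      (tendsto_neg_atTop_atBot.comp hn)).mono_right atBot_le_cocompact))
      (Eventually.of_forall fun n => ?_)
    have hx : φ x = c ^ n * φ (x + -n) := by
      rw [← apply_add_natCast_eq_pow_mul h, neg_add_cancel_right]
    rw [hx, norm_mul, norm_pow]
    exact mul_le_of_le_one_left (norm_nonneg _) (pow_le_one₀ (norm_nonneg _) hc)

theorem eq_one_and_eq_zero_of_tendsto_mul_abs_rpow {p : ℝ → ℝ} {L e c₁ c₂ : ℝ} (hL : 0 ≤ L)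
    (hp : ∀ x, p (x + 1) = L * p x)
    (htop : Tendsto (fun x => p x * |x| ^ e) atTop (𝓝 c₁))
    (hbot : Tendsto (fun x => p x * |x| ^ e) atBot (𝓝 c₂)) (hc₁ : c₁ ≠ 0) (hc₂ : c₂ ≠ 0) :
    L = 1 ∧ c₁ = c₂ ∧ e = 0 := by
  -- Along `n` and `-n` the quotient is `(L ^ 2) ^ n`; once `L = 1`, doubling `n`
  -- multiplies by `2 ^ e`.
  have hn : Tendsto (fun n : ℕ => (n : ℝ)) atTop atTop := tendsto_natCast_atTop_atTop
  have hu : Tendsto (fun n : ℕ => p n * (n : ℝ) ^ e) atTop (𝓝 c₁) := by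
    refine (htop.comp hn).congr fun n => ?_
    simp only [Function.comp_apply, Nat.abs_cast]
  have hv : Tendsto (fun n : ℕ => p (-n) * (n : ℝ) ^ e) atTop (𝓝 c₂) := by
    refine (hbot.comp (tendsto_neg_atTop_atBot.comp hn)).congr fun n => ?_
    simp only [Function.comp_apply, abs_neg, Nat.abs_cast]
  have hpos : ∀ n : ℕ, p n = L ^ n * p 0 := fun n => by
    simpa using apply_add_natCast_eq_pow_mul hp 0 n
  have hneg : ∀ n : ℕ, p 0 = L ^ n * p (-n) := fun n => by
    simpa using apply_add_natCast_eq_pow_mul hp (-n) n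
  have hL : L = 1 := by
    have hsq : Tendsto (fun n : ℕ => (L ^ 2) ^ n) atTop (𝓝 (c₁ / c₂)) := by
      refine (hu.div hv hc₂).congr' ?_
      filter_upwards [hv.eventually_ne hc₂] with n hn
      rw [Pi.div_apply, div_eq_iff hn, hpos, hneg n]
      ring
    have := eq_one_of_tendsto_of_comp_eq_mul hsq (div_ne_zero hc₁ hc₂) (tendsto_add_atTop_nat 1)
      fun n => pow_succ' _ n
    exact (pow_eq_one_iff_of_nonneg hL two_ne_zero).1 this
  have hp0 : ∀ n : ℕ, p n = p 0 := fun n => by rw [hpos, hL, one_pow, one_mul]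
  refine ⟨hL, ?_, ?_⟩
  · refine tendsto_nhds_unique hu (hv.congr fun n => ?_)
    rw [hp0, hneg n, hL, one_pow, one_mul]
  · have htwo : (2 : ℝ) ^ e = 1 := by
      refine eq_one_of_tendsto_of_comp_eq_mul (σ := fun n => 2 * n) hu hc₁
        (tendsto_id.const_mul_atTop' two_pos) fun n => ?_
      rw [hp0, hp0 n, Nat.cast_mul, Nat.cast_two, Real.mul_rpow zero_le_two n.cast_nonneg]
      ring
    rwa [← Real.rpow_zero 2, Real.rpow_right_inj two_pos (by norm_num)] at htwo

theorem I_sub_ofReal_ne_zero (x : ℝ) : I - x ≠ 0 := fun h => by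
  simpa using congrArg im h

theorem tendsto_abs_cocompact_atTop : Tendsto (fun x : ℝ => |x|) (cocompact ℝ) atTop :=
  tendsto_norm_cocompact_atTop

theorem tendsto_I_sub_div_ofReal : Tendsto (fun x : ℝ => (I - x) / x) (cocompact ℝ) (𝓝 (-1)) := by
  have hinv : Tendsto (fun x : ℝ => (x : ℂ)⁻¹) (cocompact ℝ) (𝓝 0) := by
    rw [tendsto_zero_iff_norm_tendsto_zero]
    refine (tendsto_inv_atTop_zero.comp tendsto_abs_cocompact_atTop).congr fun x => ?_
    simp
  have hlim : Tendsto (fun x : ℝ => I * (x : ℂ)⁻¹ - 1) (cocompact ℝ) (𝓝 (-1)) := by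
    simpa using (hinv.const_mul I).sub_const 1
  refine hlim.congr' ?_
  filter_upwards [tendsto_abs_cocompact_atTop.eventually_gt_atTop 0] with x hx
  have hx : (x : ℂ) ≠ 0 := ofReal_ne_zero.2 (abs_pos.1 hx)
  field_simp

theorem tendsto_arg_I_sub_atTop : Tendsto (fun x : ℝ => arg (I - x)) atTop (𝓝 Real.pi) := by
  have hwithin : Tendsto (fun x : ℝ => (I - x) / x) atTop (𝓝[{z | 0 ≤ z.im}] (-1)) := by
    refine tendsto_nhdsWithin_iff.2 ⟨tendsto_I_sub_div_ofReal.mono_left atTop_le_cocompact, ?_⟩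
    filter_upwards [eventually_gt_atTop 0] with x hx
    simp [div_ofReal_im, hx.le]
  refine ((tendsto_arg_nhdsWithin_im_nonneg_of_re_neg_of_im_zero (by simp) (by simp)).comp
    hwithin).congr' ?_
  filter_upwards [eventually_gt_atTop 0] with x hx
  rw [Function.comp_apply, div_eq_mul_inv, ← ofReal_inv, arg_mul_real (inv_pos.2 hx)]

theorem tendsto_arg_I_sub_atBot : Tendsto (fun x : ℝ => arg (I - x)) atBot (𝓝 0) := by
  have hlim : Tendsto (fun x : ℝ => -((I - x) / x)) atBot (𝓝 1) := by
    simpa using (tendsto_I_sub_div_ofReal.mono_left atBot_le_cocompact).neg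
  have harg : Tendsto arg (𝓝 1) (𝓝 0) := by
    simpa using (continuousAt_arg one_mem_slitPlane).tendsto
  refine (harg.comp hlim).congr' ?_
  filter_upwards [eventually_lt_atBot 0] with x hx
  rw [Function.comp_apply, ← div_neg, div_eq_mul_inv, ← ofReal_neg, ← ofReal_inv,
    arg_mul_real (inv_pos.2 (neg_pos.2 hx))]

def HasAsymptoticExpansion (g : ℝ → ℂ) (k : ℤ) (b : ℤ → ℂ) : Prop :=
  ∀ N : ℤ, k ≤ N → ∃ C M : ℝ, 1 ≤ M ∧ ∀ x : ℝ, M ≤ |x| →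
    ‖g x - ∑ n ∈ Finset.Icc k (N - 1), b n * (x : ℂ) ^ (-n)‖ ≤ C * |x| ^ (-N)

theorem HasAsymptoticExpansion.tendsto_zpow_mul {g : ℝ → ℂ} {k : ℤ} {b : ℤ → ℂ}
    (hg : HasAsymptoticExpansion g k b) {N : ℤ} (hN : k ≤ N)
    (hb : ∀ n, k ≤ n → n < N → b n = 0) :
    Tendsto (fun x : ℝ => (x : ℂ) ^ N * g x) (cocompact ℝ) (𝓝 (b N)) := by
  obtain ⟨C, M, hM, hCM⟩ := hg (N + 1) (by omega)
  have hsum (x : ℝ) : ∑ n ∈ Finset.Icc k (N + 1 - 1), b n * (x : ℂ) ^ (-n) = b N * (x : ℂ) ^ (-N) :=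
    Finset.sum_eq_single_of_mem N (by simp [hN]) fun n hn hne => by
      rw [hb n (Finset.mem_Icc.1 hn).1 (by grind), zero_mul]
  rw [← tendsto_sub_nhds_zero_iff]
  refine squeeze_zero_norm' ?_ (by
    simpa using (tendsto_inv_atTop_zero.comp tendsto_abs_cocompact_atTop).const_mul C)
  filter_upwards [tendsto_abs_cocompact_atTop.eventually_ge_atTop M] with x hxM
  have hx₀ : 0 < |x| := by linarith
  have hx : (x : ℂ) ≠ 0 := ofReal_ne_zero.2 (abs_pos.1 hx₀)
  have hbound := hCM x hxM
  rw [hsum] at hbound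
  calc ‖(x : ℂ) ^ N * g x - b N‖ = |x| ^ N * ‖g x - b N * (x : ℂ) ^ (-N)‖ := by
        have hfactor : (x : ℂ) ^ N * g x - b N = (x : ℂ) ^ N * (g x - b N * (x : ℂ) ^ (-N)) := by
          rw [mul_sub, mul_left_comm, ← zpow_add₀ hx, add_neg_cancel, zpow_zero, mul_one]
        rw [hfactor, norm_mul, norm_zpow, norm_real, Real.norm_eq_abs]
    _ ≤ |x| ^ N * (C * |x| ^ (-(N + 1))) := by gcongr
    _ = C * |x|⁻¹ := by
        rw [mul_left_comm, ← zpow_add₀ hx₀.ne']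
        simp

theorem tendsto_norm_mul_abs_rpow {l : Filter ℝ} (hl : l ≤ cocompact ℝ) {θ : ℝ}
    (harg : Tendsto (fun x : ℝ => arg (I - x)) l (𝓝 θ)) {w β : ℂ} {N : ℤ} {φ : ℝ → ℂ}
    (h : Tendsto (fun x : ℝ => (x : ℂ) ^ N * ((I - x) ^ w * φ x)) l (𝓝 β)) :
    Tendsto (fun x => ‖φ x‖ * |x| ^ (N + w.re)) l (𝓝 (‖β‖ * Real.exp (θ * w.im))) := by
  have hratio : Tendsto (fun x : ℝ => ‖(I - x) / x‖ ^ w.re) l (𝓝 1) := by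
    simpa using ((tendsto_I_sub_div_ofReal.mono_left hl).norm.rpow_const (by simp))
  have hlim := (h.norm.mul (harg.mul_const w.im).rexp).div hratio one_ne_zero
  rw [div_one] at hlim
  refine hlim.congr' ?_
  filter_upwards [(tendsto_abs_cocompact_atTop.mono_left hl).eventually_gt_atTop 0] with x hx
  rw [Pi.div_apply, norm_mul, norm_mul, norm_zpow, norm_real,
    norm_cpow_of_ne_zero (I_sub_ofReal_ne_zero x), norm_div, norm_real, Real.norm_eq_abs,
    Real.div_rpow (norm_nonneg _) hx.le, Real.rpow_add hx, Real.rpow_intCast]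
  have hI : 0 < ‖I - (x : ℂ)‖ ^ w.re := by
    have := I_sub_ofReal_ne_zero x
    positivity
  field_simp

theorem eq_zero_of_hasAsymptoticExpansion_zero {w c : ℂ} {φ : ℝ → ℂ} {k : ℤ} {b : ℤ → ℂ}
    (hφ : ∀ x, φ (x + 1) = c * φ x) (hg : HasAsymptoticExpansion (fun x => (I - x) ^ w * φ x) k b)
    (hb : ∀ n, k ≤ n → b n = 0) (x : ℝ) : φ x = 0 := by
  obtain ⟨N, hkN, hN⟩ : ∃ N : ℤ, k ≤ N ∧ 0 ≤ N + w.re :=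
    ⟨max k ⌈-w.re⌉, le_max_left _ _, by
      have := (Int.le_ceil (-w.re)).trans (Int.cast_le.2 (le_max_right k ⌈-w.re⌉))
      linarith⟩
  have hlead := hg.tendsto_zpow_mul hkN fun n hn _ => hb n hn
  rw [hb N hkN] at hlead
  have hψ : Tendsto (fun x => ‖φ x‖ * |x| ^ (N + w.re)) (cocompact ℝ) (𝓝 0) := by
    rw [cocompact_eq_atBot_atTop, tendsto_sup]
    constructor
    · simpa using tendsto_norm_mul_abs_rpow atBot_le_cocompact tendsto_arg_I_sub_atBot
        (hlead.mono_left atBot_le_cocompact)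
    · simpa using tendsto_norm_mul_abs_rpow atTop_le_cocompact tendsto_arg_I_sub_atTop
        (hlead.mono_left atTop_le_cocompact)
  refine eq_zero_of_tendsto_cocompact hφ ?_ x
  rw [tendsto_zero_iff_norm_tendsto_zero]
  refine squeeze_zero' (Eventually.of_forall fun _ => norm_nonneg _) ?_ hψ
  filter_upwards [tendsto_abs_cocompact_atTop.eventually_ge_atTop 1] with y hy
  exact le_mul_of_one_le_right (norm_nonneg _) (Real.one_le_rpow hy hN)

theorem eq_const_of_hasAsymptoticExpansion {w c : ℂ} {φ : ℝ → ℂ} {k N : ℤ} {b : ℤ → ℂ}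
    (hφ : ∀ x, φ (x + 1) = c * φ x) (hg : HasAsymptoticExpansion (fun x => (I - x) ^ w * φ x) k b)
    (hkN : k ≤ N) (hbN : b N ≠ 0) (hb : ∀ n, k ≤ n → n < N → b n = 0) :
    c = 1 ∧ w = -N ∧ ∀ x, φ x = (-1) ^ N * b N := by
  have hlead := hg.tendsto_zpow_mul hkN hb
  have hβ : 0 < ‖b N‖ := norm_pos_iff.2 hbN
  obtain ⟨-, hlim, he⟩ := eq_one_and_eq_zero_of_tendsto_mul_abs_rpow (p := fun x => ‖φ x‖)
    (norm_nonneg c) (fun x => by rw [hφ, norm_mul])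
    (tendsto_norm_mul_abs_rpow atTop_le_cocompact tendsto_arg_I_sub_atTop
      (hlead.mono_left atTop_le_cocompact))
    (tendsto_norm_mul_abs_rpow atBot_le_cocompact tendsto_arg_I_sub_atBot
      (hlead.mono_left atBot_le_cocompact)) (by positivity) (by positivity)
  have him : w.im = 0 := by
    rw [zero_mul, Real.exp_zero, mul_one, mul_eq_left₀ hβ.ne', Real.exp_eq_one_iff] at hlim
    exact (mul_eq_zero.1 hlim).resolve_left Real.pi_ne_zero
  have hw : w = -N := Complex.ext (by simp; linarith) (by simpa using him)
  have hφlim : Tendsto φ atTop (𝓝 ((-1) ^ N * b N)) := by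
    refine (((tendsto_I_sub_div_ofReal.zpow₀ N (by simp)).mul hlead).mono_left
      atTop_le_cocompact).congr' ?_
    filter_upwards [eventually_gt_atTop 0] with x hx
    have hx : (x : ℂ) ≠ 0 := ofReal_ne_zero.2 hx.ne'
    have hI := I_sub_ofReal_ne_zero x
    rw [hw, cpow_neg, cpow_intCast, div_zpow]
    field_simp
  have hc : c = 1 := eq_one_of_tendsto_of_comp_eq_mul hφlim
    (mul_ne_zero (zpow_ne_zero _ (by norm_num)) hbN)
    (tendsto_atTop_add_const_right _ 1 tendsto_id) hφ
  refine ⟨hc, hw, fun x => ?_⟩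
  have hshift (n : ℕ) : φ (x + n) = φ x := by
    rw [apply_add_natCast_eq_pow_mul hφ, hc, one_pow, one_mul]
  have h := hφlim.comp (tendsto_atTop_add_const_left _ x tendsto_natCast_atTop_atTop)
  simp only [Function.comp_def, hshift] at h
  exact tendsto_nhds_unique tendsto_const_nhds h

theorem AnalyticOnNhd.eq_const_of_forall_ofReal {f : ℂ → ℂ} {S : Set ℂ}
    (hf : AnalyticOnNhd ℂ f S) (hS : IsPreconnected S) {x₀ : ℝ} (hx₀ : (x₀ : ℂ) ∈ S) {c : ℂ}
    (hc : ∀ x : ℝ, f x = c) {t : ℂ} (ht : t ∈ S) : f t = c := by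
  have hreal : Tendsto ((↑) : ℝ → ℂ) (𝓝[≠] x₀) (𝓝[≠] (x₀ : ℂ)) :=
    continuous_ofReal.continuousWithinAt.tendsto_nhdsWithin fun x hx => by simpa using hx
  exact hf.eqOn_of_preconnected_of_frequently_eq analyticOnNhd_const hS hx₀
    (hreal.frequently (Frequently.of_forall hc)) ht

theorem lambda_periodic_two_sided_asymptotics_general
    (r lam : ℂ) (k : ℤ) (b : ℤ → ℂ)
    (U : Set ℂ) (hU : IsOpen U) (hUsub : {t : ℂ | t.im ≤ 0} ⊆ U)
    (f : ℂ → ℂ) (hf : DifferentiableOn ℂ f U)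
    (hper : ∀ t : ℂ, t.im ≤ 0 → f (t + 1) = lam * f t)
    (hasymp : ∀ N : ℤ, k ≤ N → ∃ C M : ℝ, 1 ≤ M ∧ ∀ x : ℝ, M ≤ |x| →
        ‖(Complex.I - (x : ℂ)) ^ ((2 : ℂ) - r) * f (x : ℂ) -
            ∑ n ∈ Finset.Icc k (N - 1), b n * (x : ℂ) ^ (-n)‖ ≤ C * |x| ^ (-N)) :
    ((lam = 1 ∧ ∃ m : ℤ, k + 2 ≤ m ∧ r = (m : ℂ)) →
        ∃ c : ℂ, ∀ t : ℂ, t.im ≤ 0 → f t = c) ∧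
    (¬ (lam = 1 ∧ ∃ m : ℤ, k + 2 ≤ m ∧ r = (m : ℂ)) →
        ∀ t : ℂ, t.im ≤ 0 → f t = 0) := by
  have hφ (x : ℝ) : f ↑(x + 1) = lam * f x := by simpa using hper x (by simp)
  have hexp : HasAsymptoticExpansion (fun x => (I - x) ^ (2 - r) * f x) k b := hasymp
  have hext (c : ℂ) (hc : ∀ x : ℝ, f x = c) (t : ℂ) (ht : t.im ≤ 0) : f t = c :=
    ((hf.analyticOnNhd hU).mono hUsub).eq_const_of_forall_ofReal
      (convex_halfSpace_im_le 0).isPreconnected (x₀ := 0) (by simp) hc ht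
  by_cases hb : ∀ n, k ≤ n → b n = 0
  · have hzero := hext 0 (eq_zero_of_hasAsymptoticExpansion_zero (φ := fun x => f x) hφ hexp hb)
    exact ⟨fun _ => ⟨0, hzero⟩, fun _ => hzero⟩
  push Not at hb
  obtain ⟨N, ⟨hkN, hbN⟩, hmin⟩ := Int.exists_least_of_bdd ⟨k, fun n hn => hn.1⟩ hb
  obtain ⟨hlam, hw, hconst⟩ := eq_const_of_hasAsymptoticExpansion (φ := fun x => f x) hφ hexp hkN
    hbN fun n hkn hn => not_not.1 fun hbn => (hmin n ⟨hkn, hbn⟩).not_gt hn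
  have hr : r = ((N + 2 : ℤ) : ℂ) := by push_cast; linear_combination -hw
  exact ⟨fun _ => ⟨_, hext _ hconst⟩, fun hnot => (hnot ⟨hlam, N + 2, by omega, hr⟩).elim⟩

/-- A `λ`-periodic holomorphic function on a neighbourhood of the closed
lower half-plane whose projective version `(i-t)^(2-r) f t` has the same asymptotic
expansion `∑_{n ≥ k} b n t^(-n)` as `t → +∞` and `t → -∞` along `ℝ` is constant if
`λ = 1` and `r ∈ ℤ`, `r ≥ k+2`, and is zero in all other cases. -/
theorem lambda_periodic_two_sided_asymptotics
    (r lam : ℂ) (hlam : lam ≠ 0) (k : ℤ) (b : ℤ → ℂ)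
    (U : Set ℂ) (hU : IsOpen U) (hUsub : {t : ℂ | t.im ≤ 0} ⊆ U)
    (f : ℂ → ℂ) (hf : DifferentiableOn ℂ f U)
    (hper : ∀ t : ℂ, t.im ≤ 0 → f (t + 1) = lam * f t)
    (hasymp : ∀ N : ℤ, k ≤ N → ∃ C M : ℝ, 1 ≤ M ∧ ∀ x : ℝ, M ≤ |x| →
        ‖(Complex.I - (x : ℂ)) ^ ((2 : ℂ) - r) * f (x : ℂ) -
            ∑ n ∈ Finset.Icc k (N - 1), b n * (x : ℂ) ^ (-n)‖ ≤ C * |x| ^ (-N)) :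
    ((lam = 1 ∧ ∃ m : ℤ, k + 2 ≤ m ∧ r = (m : ℂ)) →
        ∃ c : ℂ, ∀ t : ℂ, t.im ≤ 0 → f t = c) ∧
    (¬ (lam = 1 ∧ ∃ m : ℤ, k + 2 ≤ m ∧ r = (m : ℂ)) →
        ∀ t : ℂ, t.im ≤ 0 → f t = 0) :=
  lambda_periodic_two_sided_asymptotics_general r lam k b U hU hUsub f hf hper hasymp
end

section
/- Let λ ∈ ℂ* with |λ| > 1, let r ∈ ℂ, and let g : ℍ⁻ → ℂ be holomorphic such that (i-t)^(2-r) g(t) extends holomorphically to a neighbourhood of the closed lower half-plane in the Riemann sphere. Then the one-sided average (A⁺g)(t) := ∑_{n ≥ 0} λ^(-n) g(t + n) converges absolutely on ℍ⁻, defines a holomorphic function there, and satisfies (A⁺g)(t) - λ^(-1)(A⁺g)(t+1) = g(t). -/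
open Complex Filter

/-!
Write `g t = (i - t)^(r - 2) H t`. Since `H` is continuous on the closed lower half-plane and
bounded near `∞`, it is bounded there, and `‖i - t‖ ≥ 1` on the lower half-plane, so `g` grows at
most like `(1 + ‖t‖)^k` with `k ≥ Re r - 2`. Hence the `n`-th term of the average at `t` is
bounded by a constant, locally uniform in `t`, times `(n + 1)^k ‖λ‖^(-n)`, which is summable for
`‖λ‖ > 1`. Absolute convergence and holomorphy (by Weierstrass' theorem) follow, and the
functional equation is the splitting off of the term `n = 0`.
-/

theorem exists_norm_le_of_continuousOn_of_norm_le_outside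
    {E F : Type*} [NormedAddCommGroup E] [ProperSpace E] [NormedAddCommGroup F]
    {S : Set E} (hS : IsClosed S) {H : E → F} (hH : ContinuousOn H S) {R C : ℝ}
    (hC : ∀ t, R < ‖t‖ → ‖H t‖ ≤ C) : ∃ C' : ℝ, ∀ s ∈ S, ‖H s‖ ≤ C' := by
  obtain ⟨C₀, hC₀⟩ := ((isCompact_closedBall 0 R).inter_left hS).exists_bound_of_continuousOn
    (hH.mono Set.inter_subset_left)
  refine ⟨max C₀ C, fun s hs => ?_⟩
  rcases le_or_gt ‖s‖ R with hsR | hsR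
  · exact (hC₀ s ⟨hs, mem_closedBall_zero_iff.mpr hsR⟩).trans (le_max_left _ _)
  · exact (hC s hsR).trans (le_max_right _ _)

theorem norm_cpow_le_pow_mul_exp {z w : ℂ} (hz : 1 ≤ ‖z‖) {k : ℕ} (hk : w.re ≤ k) :
    ‖z ^ w‖ ≤ ‖z‖ ^ k * Real.exp (Real.pi * |w.im|) := by
  have harg : -(arg z * w.im) ≤ Real.pi * |w.im| := by
    calc -(arg z * w.im) ≤ |arg z * w.im| := neg_le_abs _
      _ = |arg z| * |w.im| := abs_mul _ _
      _ ≤ Real.pi * |w.im| := by gcongr; exact abs_arg_le_pi z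
  calc ‖z ^ w‖ ≤ ‖z‖ ^ w.re / Real.exp (arg z * w.im) := norm_cpow_le z w
    _ = ‖z‖ ^ w.re * Real.exp (-(arg z * w.im)) := by rw [Real.exp_neg, div_eq_mul_inv]
    _ ≤ ‖z‖ ^ k * Real.exp (Real.pi * |w.im|) := by
      gcongr
      exact_mod_cast Real.rpow_le_rpow_of_exponent_le hz hk

theorem norm_le_of_cpow_mul_eq_of_norm_le {w : ℂ} {g H : ℂ → ℂ} {C : ℝ} {k : ℕ}
    (hk : (-w).re ≤ k) (hH : ∀ s : ℂ, s.im < 0 → ‖H s‖ ≤ C)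
    (hHg : ∀ s : ℂ, s.im < 0 → H s = (I - s) ^ w * g s) {s : ℂ} (hs : s.im < 0) :
    ‖g s‖ ≤ C * Real.exp (Real.pi * |w.im|) * (1 + ‖s‖) ^ k := by
  have hz : 1 ≤ ‖I - s‖ := by
    calc (1 : ℝ) ≤ (I - s).im := by simp; linarith
      _ ≤ ‖I - s‖ := (le_abs_self _).trans (abs_im_le_norm _)
  have hz₀ : I - s ≠ 0 := norm_pos_iff.mp (zero_lt_one.trans_le hz)
  have hgs : g s = (I - s) ^ (-w) * H s := by
    rw [hHg s hs, ← mul_assoc, ← cpow_add _ _ hz₀, neg_add_cancel, cpow_zero, one_mul]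
  have hC : 0 ≤ C := (norm_nonneg _).trans (hH s hs)
  have hzs : ‖I - s‖ ≤ 1 + ‖s‖ := by simpa using norm_sub_le I s
  calc ‖g s‖ = ‖(I - s) ^ (-w)‖ * ‖H s‖ := by rw [hgs, norm_mul]
    _ ≤ ‖I - s‖ ^ k * Real.exp (Real.pi * |w.im|) * C := by
      gcongr
      · simpa using norm_cpow_le_pow_mul_exp hz hk
      · exact hH s hs
    _ = C * Real.exp (Real.pi * |w.im|) * ‖I - s‖ ^ k := by ring
    _ ≤ C * Real.exp (Real.pi * |w.im|) * (1 + ‖s‖) ^ k := by gcongr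

theorem summable_add_one_pow_mul_geometric_of_norm_lt_one {q : ℝ} (hq : ‖q‖ < 1) (k : ℕ) :
    Summable fun n : ℕ => ((n : ℝ) + 1) ^ k * q ^ n := by
  refine .of_norm_bounded_eventually_nat
    ((summable_norm_pow_mul_geometric_of_norm_lt_one k hq).mul_left (2 ^ k)) ?_
  filter_upwards [eventually_ge_atTop 1] with n hn
  have hn' : (n : ℝ) + 1 ≤ 2 * n := by
    have : (1 : ℝ) ≤ n := by exact_mod_cast hn
    linarith
  calc ‖((n : ℝ) + 1) ^ k * q ^ n‖ = ((n : ℝ) + 1) ^ k * ‖q‖ ^ n := by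
        rw [norm_mul, norm_pow, norm_pow, Real.norm_of_nonneg (by positivity)]
    _ ≤ (2 * n) ^ k * ‖q‖ ^ n := by gcongr
    _ = 2 ^ k * ‖(n : ℝ) ^ k * q ^ n‖ := by
        rw [norm_mul, norm_pow, norm_pow, Real.norm_natCast, mul_pow, mul_assoc]

section OneSidedAverage

variable {E : Type*} [NormedAddCommGroup E] [NormedSpace ℂ E]

noncomputable def oneSidedAverage (lam : ℂ) (g : ℂ → E) (t : ℂ) : E :=
  ∑' n : ℕ, lam ^ (-(n : ℤ)) • g (t + n)

variable {lam : ℂ} {g : ℂ → E} {S : Set ℂ} {C : ℝ} {k : ℕ}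

theorem norm_zpow_neg_smul_le (hS : ∀ t ∈ S, ∀ n : ℕ, t + n ∈ S)
    (hg : ∀ s ∈ S, ‖g s‖ ≤ C * (1 + ‖s‖) ^ k) {t : ℂ} (ht : t ∈ S) (n : ℕ) :
    ‖lam ^ (-(n : ℤ)) • g (t + n)‖ ≤ C * (1 + ‖t‖) ^ k * (((n : ℝ) + 1) ^ k * ‖lam⁻¹‖ ^ n) := by
  have hC : 0 ≤ C := nonneg_of_mul_nonneg_left ((norm_nonneg _).trans (hg t ht)) (by positivity)
  have htn : 1 + ‖t + n‖ ≤ (1 + ‖t‖) * ((n : ℝ) + 1) := by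
    have := norm_add_le t (n : ℂ)
    rw [norm_natCast] at this
    nlinarith [norm_nonneg t, n.cast_nonneg (α := ℝ)]
  calc ‖lam ^ (-(n : ℤ)) • g (t + n)‖ = ‖lam⁻¹‖ ^ n * ‖g (t + n)‖ := by
        rw [norm_smul, zpow_neg, zpow_natCast, ← inv_pow, norm_pow]
    _ ≤ ‖lam⁻¹‖ ^ n * (C * ((1 + ‖t‖) * ((n : ℝ) + 1)) ^ k) := by
        gcongr
        exact (hg _ (hS t ht n)).trans (by gcongr)
    _ = C * (1 + ‖t‖) ^ k * (((n : ℝ) + 1) ^ k * ‖lam⁻¹‖ ^ n) := by rw [mul_pow]; ring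

theorem summable_norm_zpow_neg_smul (hlam : 1 < ‖lam‖) (hS : ∀ t ∈ S, ∀ n : ℕ, t + n ∈ S)
    (hg : ∀ s ∈ S, ‖g s‖ ≤ C * (1 + ‖s‖) ^ k) {t : ℂ} (ht : t ∈ S) :
    Summable fun n : ℕ => ‖lam ^ (-(n : ℤ)) • g (t + n)‖ := by
  have hq : ‖‖lam⁻¹‖‖ < 1 := by
    rw [norm_norm, norm_inv]; exact inv_lt_one_of_one_lt₀ hlam
  exact ((summable_add_one_pow_mul_geometric_of_norm_lt_one hq k).mul_left _).of_nonneg_of_le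
    (fun n => norm_nonneg _) (norm_zpow_neg_smul_le hS hg ht)

theorem differentiableOn_oneSidedAverage [CompleteSpace E] (hlam : 1 < ‖lam‖) (hSo : IsOpen S)
    (hS : ∀ t ∈ S, ∀ n : ℕ, t + n ∈ S) (hgd : DifferentiableOn ℂ g S)
    (hg : ∀ s ∈ S, ‖g s‖ ≤ C * (1 + ‖s‖) ^ k) :
    DifferentiableOn ℂ (oneSidedAverage lam g) S := by
  intro t₀ ht₀
  have hC : 0 ≤ C := nonneg_of_mul_nonneg_left ((norm_nonneg _).trans (hg t₀ ht₀)) (by positivity)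
  have hq : ‖‖lam⁻¹‖‖ < 1 := by
    rw [norm_norm, norm_inv]; exact inv_lt_one_of_one_lt₀ hlam
  -- On `U` the majorant of `norm_zpow_neg_smul_le` is uniform in `t`.
  set U := S ∩ Metric.ball 0 (‖t₀‖ + 1)
  have hU : IsOpen U := hSo.inter Metric.isOpen_ball
  have ht₀U : t₀ ∈ U := ⟨ht₀, by simp⟩
  have hdiff : DifferentiableOn ℂ (oneSidedAverage lam g) U := by
    refine differentiableOn_tsum_of_summable_norm
      ((summable_add_one_pow_mul_geometric_of_norm_lt_one hq k).mul_left
        (C * (1 + (‖t₀‖ + 1)) ^ k)) (fun n => ?_) hU (fun n w hw => ?_)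
    · exact (hgd.comp (differentiableOn_id.add_const _) fun w hw => hS w hw.1 n).const_smul _
    · have hw' : ‖w‖ < ‖t₀‖ + 1 := by simpa using hw.2
      refine (norm_zpow_neg_smul_le hS hg hw.1 n).trans ?_
      gcongr
  exact (hdiff t₀ ht₀U).differentiableAt (hU.mem_nhds ht₀U) |>.differentiableWithinAt

theorem oneSidedAverage_sub_inv_smul_add_one (hlam : lam ≠ 0) {t : ℂ}
    (h : Summable fun n : ℕ => lam ^ (-(n : ℤ)) • g (t + n)) :
    oneSidedAverage lam g t - lam⁻¹ • oneSidedAverage lam g (t + 1) = g t := by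
  have hshift (n : ℕ) : lam ^ (-((n + 1 : ℕ) : ℤ)) • g (t + (n + 1 : ℕ)) =
      lam⁻¹ • lam ^ (-(n : ℤ)) • g (t + 1 + n) := by
    rw [smul_smul, ← zpow_neg_one, ← zpow_add₀ hlam]
    push_cast
    ring_nf
  rw [oneSidedAverage, h.tsum_eq_zero_add, oneSidedAverage, ← tsum_const_smul'']
  simp only [hshift]
  simp

end OneSidedAverage

theorem one_sided_average_geometric_general
    (r lam : ℂ) (hlam : 1 < ‖lam‖)
    (g : ℂ → ℂ) (hg : DifferentiableOn ℂ g {t : ℂ | t.im < 0})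
    (U : Set ℂ) (hUsub : {t : ℂ | t.im ≤ 0} ⊆ U)
    (R : ℝ)
    (H : ℂ → ℂ) (hH : DifferentiableOn ℂ H U)
    (hHbd : ∃ Cb : ℝ, ∀ t : ℂ, R < ‖t‖ → ‖H t‖ ≤ Cb)
    (hHg : ∀ t : ℂ, t.im < 0 → H t = (Complex.I - t) ^ ((2 : ℂ) - r) * g t) :
    (∀ t : ℂ, t.im < 0 → Summable (fun n : ℕ => ‖lam ^ (-(n : ℤ)) * g (t + (n : ℂ))‖)) ∧
    DifferentiableOn ℂ (fun t => ∑' n : ℕ, lam ^ (-(n : ℤ)) * g (t + (n : ℂ)))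
      {t : ℂ | t.im < 0} ∧
    (∀ t : ℂ, t.im < 0 →
      (∑' n : ℕ, lam ^ (-(n : ℤ)) * g (t + (n : ℂ))) -
          lam⁻¹ * ∑' n : ℕ, lam ^ (-(n : ℤ)) * g (t + 1 + (n : ℂ)) = g t) := by
  obtain ⟨Cb, hCb⟩ := hHbd
  obtain ⟨CH, hCH⟩ := exists_norm_le_of_continuousOn_of_norm_le_outside
    (isClosed_le continuous_im continuous_const) (hH.continuousOn.mono hUsub) hCb
  obtain ⟨k, hk⟩ := exists_nat_ge (-(2 - r)).re
  have hgrowth : ∀ s ∈ {t : ℂ | t.im < 0},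
      ‖g s‖ ≤ CH * Real.exp (Real.pi * |(2 - r).im|) * (1 + ‖s‖) ^ k :=
    fun s hs => norm_le_of_cpow_mul_eq_of_norm_le hk (fun s hs => hCH s hs.le) hHg hs
  have hshift : ∀ t ∈ {t : ℂ | t.im < 0}, ∀ n : ℕ, t + n ∈ {t : ℂ | t.im < 0} := by
    intro t ht n; simpa using ht
  have hsum : ∀ t : ℂ, t.im < 0 → Summable (fun n : ℕ => ‖lam ^ (-(n : ℤ)) * g (t + n)‖) :=
    fun t ht => summable_norm_zpow_neg_smul hlam hshift hgrowth ht
  refine ⟨hsum, differentiableOn_oneSidedAverage hlam (isOpen_lt continuous_im continuous_const)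
    hshift hg hgrowth, fun t ht => ?_⟩
  exact oneSidedAverage_sub_inv_smul_add_one (norm_pos_iff.mp (one_pos.trans hlam))
    (hsum t ht).of_norm

/-- For `|λ| > 1` and `g` holomorphic on the lower half-plane such that
`(i-t)^(2-r) g t` extends holomorphically to a neighbourhood of the closed lower
half-plane in the Riemann sphere (extension `H`, holomorphic and bounded near `∞`),
the one-sided average `(A⁺g)(t) = ∑_{n ≥ 0} λ^(-n) g (t+n)` converges absolutely on
the lower half-plane, is holomorphic there, and satisfies
`(A⁺g)(t) - λ⁻¹ (A⁺g)(t+1) = g t`. -/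
theorem one_sided_average_geometric
    (r lam : ℂ) (hlam : 1 < ‖lam‖)
    (g : ℂ → ℂ) (hg : DifferentiableOn ℂ g {t : ℂ | t.im < 0})
    (U : Set ℂ) (hU : IsOpen U) (hUsub : {t : ℂ | t.im ≤ 0} ⊆ U)
    (R : ℝ) (hRU : {t : ℂ | R < ‖t‖} ⊆ U)
    (H : ℂ → ℂ) (hH : DifferentiableOn ℂ H U)
    (hHbd : ∃ Cb : ℝ, ∀ t : ℂ, R < ‖t‖ → ‖H t‖ ≤ Cb)
    (hHg : ∀ t : ℂ, t.im < 0 → H t = (Complex.I - t) ^ ((2 : ℂ) - r) * g t) :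
    (∀ t : ℂ, t.im < 0 → Summable (fun n : ℕ => ‖lam ^ (-(n : ℤ)) * g (t + (n : ℂ))‖)) ∧
    DifferentiableOn ℂ (fun t => ∑' n : ℕ, lam ^ (-(n : ℤ)) * g (t + (n : ℂ)))
      {t : ℂ | t.im < 0} ∧
    (∀ t : ℂ, t.im < 0 →
      (∑' n : ℕ, lam ^ (-(n : ℤ)) * g (t + (n : ℂ))) -
          lam⁻¹ * ∑' n : ℕ, lam ^ (-(n : ℤ)) * g (t + 1 + (n : ℂ)) = g t) :=
  one_sided_average_geometric_general r lam hlam g hg U hUsub R H hH hHbd hHg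
end

section
/- Let r ∈ ℂ. For t in the lower half-plane and z in the upper half-plane let ω_r(F;t,z) = (z-t)^(r-2) F(z) dz with arg(z-t) ∈ (-π/2, 3π/2). Then for every g = [[a,b],[c,d]] ∈ SL₂(ℝ), (cz+d)^(-r) F(gz) · (g z - g t)^(r-2) · (ct+d)^(r-2) · d(gz) = (z-t)^(r-2) F(z) dz, i.e. ω_r transforms equivariantly: ω_r(F; ·, gz)|_{2-r} g = ω_r(F|_r g; ·, z), where the actions use the argument conventions arg(cz+d) ∈ (-π,π] for z ∈ ℍ and arg(ct+d) ∈ [-π,π) for t ∈ ℍ⁻. -/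
/-!
Writing `A = cz + d` and `B = ct + d`, one has `gz - gt = (z - t) / (A B)`, so the identity
reduces to `log (gz - gt) = log (z - t) - log A - log⁻ B`, where `log⁻ w = conj (log (conj w))`
is the logarithm with argument in `[-π, π)` underlying `cpowLHP`. Both sides have the same
exponential, so they differ by a multiple of `2πi`; it vanishes because `B = conj (c t̄ + d)`
with `t̄ ∈ ℍ`, and `cz + d`, `c t̄ + d` lie in a common open half-plane (or coincide), so their
arguments differ by less than `π`. The weights then combine as
`A ^ (-(r - 2)) * A ^ (-2) = A ^ (-r)`.
-/

open Complex

/-- Lower row of the Möbius action: `cz + d`. -/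
noncomputable def mdenom (g : Matrix.SpecialLinearGroup (Fin 2) ℝ) (z : ℂ) : ℂ :=
  (g.1 1 0 : ℂ) * z + (g.1 1 1 : ℂ)

/-- Möbius action of `SL₂(ℝ)` on ℂ: `(az+b)/(cz+d)`. -/
noncomputable def mact (g : Matrix.SpecialLinearGroup (Fin 2) ℝ) (z : ℂ) : ℂ :=
  ((g.1 0 0 : ℂ) * z + (g.1 0 1 : ℂ)) / mdenom g z

/-- Complex power with the branch `arg ∈ [-π, π)` (used for `(ct+d)^s` with `t` in the
lower half-plane); it agrees with the principal branch except on `(-∞, 0)`. -/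
noncomputable def cpowLHP (w s : ℂ) : ℂ :=
  if w.arg = Real.pi then Complex.exp (s * (Complex.log w - 2 * (Real.pi : ℂ) * Complex.I))
  else w ^ s

open ComplexConjugate

namespace Complex

theorem log_eq_of_exp_eq {L w : ℂ} (h : exp L = w) (him : |L.im - w.arg| < 2 * Real.pi) :
    log w = L := by
  obtain ⟨n, hn⟩ := exp_eq_exp_iff_exists_int.mp ((exp_log (h ▸ exp_ne_zero L)).trans h.symm)
  have hn_im : w.arg = L.im + n * (2 * Real.pi) := by simpa [log_im] using congrArg im hn
  have hn0 : n = 0 := by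
    rw [hn_im, sub_add_cancel_left, abs_neg, abs_mul, abs_of_pos Real.two_pi_pos] at him
    have : |(n : ℝ)| < 1 := (mul_lt_iff_lt_one_left Real.two_pi_pos).mp him
    exact Int.abs_lt_one_iff.mp (by exact_mod_cast this)
  simpa [hn0] using hn

theorem abs_arg_ofReal_mul_add_sub_lt_pi (c d : ℝ) {z w : ℂ} (hz : 0 < z.im) (hw : 0 < w.im) :
    |arg (c * z + d) - arg (c * w + d)| < Real.pi := by
  have arg_pos {u : ℂ} (hu : 0 < u.im) : 0 < arg u :=
    (arg_nonneg_iff.mpr hu.le).lt_of_ne fun h => hu.ne' (arg_eq_zero_iff.mp h.symm).2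
  have arg_lt_pi {u : ℂ} (hu : 0 < u.im) : arg u < Real.pi := arg_lt_pi_iff.mpr (.inr hu.ne')
  rcases lt_trichotomy c 0 with hc | rfl | hc
  · have hzc : (c * z + d).im < 0 := by simpa using mul_neg_of_neg_of_pos hc hz
    have hwc : (c * w + d).im < 0 := by simpa using mul_neg_of_neg_of_pos hc hw
    rw [abs_lt]; constructor <;>
      linarith [arg_neg_iff.mpr hzc, arg_neg_iff.mpr hwc, neg_pi_lt_arg (c * z + d),
        neg_pi_lt_arg (c * w + d)]
  · simp [Real.pi_pos]
  · have hzc : 0 < (c * z + d).im := by simpa using mul_pos hc hz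
    have hwc : 0 < (c * w + d).im := by simpa using mul_pos hc hw
    rw [abs_lt]; constructor <;>
      linarith [arg_pos hzc, arg_pos hwc, arg_lt_pi hzc, arg_lt_pi hwc]

end Complex

noncomputable def logLHP (w : ℂ) : ℂ := conj (log (conj w))

theorem exp_logLHP {w : ℂ} (hw : w ≠ 0) : exp (logLHP w) = w := by
  rw [logLHP, exp_conj, exp_log ((map_ne_zero conj).mpr hw), conj_conj]

theorem logLHP_im (w : ℂ) : (logLHP w).im = -arg (conj w) := by
  rw [logLHP, conj_im, log_im]

theorem cpowLHP_eq_exp_logLHP {w : ℂ} (hw : w ≠ 0) (s : ℂ) :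
    cpowLHP w s = exp (logLHP w * s) := by
  rw [cpowLHP, logLHP, log_conj_eq_ite]
  split_ifs with h
  · rw [mul_comm]
    congr 2
    apply Complex.ext <;> simp [log_re, log_im, h]
    ring
  · rw [conj_conj, cpow_def_of_ne_zero hw]

theorem Matrix.SpecialLinearGroup.det_fin_two_eq_one (g : SpecialLinearGroup (Fin 2) ℝ) :
    g.1 0 0 * g.1 1 1 - g.1 0 1 * g.1 1 0 = 1 := by
  rw [← det_fin_two, det_coe]

section MobiusAction

variable (g : Matrix.SpecialLinearGroup (Fin 2) ℝ) {z t : ℂ}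

theorem mdenom_ne_zero (hz : z.im ≠ 0) : mdenom g z ≠ 0 := by
  intro h
  have him : g.1 1 0 * z.im = 0 := by simpa [mdenom] using congrArg im h
  have hc : g.1 1 0 = 0 := (mul_eq_zero.mp him).resolve_right hz
  have hd : g.1 1 1 = 0 := by simpa [mdenom, hc] using h
  simpa [hc, hd] using g.det_fin_two_eq_one

theorem conj_mdenom (z : ℂ) : conj (mdenom g z) = mdenom g (conj z) := by
  simp [mdenom]

theorem im_mact (z : ℂ) : (mact g z).im = z.im / normSq (mdenom g z) := by
  simp only [mact, mdenom, div_im, add_re, add_im, mul_re, mul_im, ofReal_re, ofReal_im]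
  linear_combination (z.im / normSq (↑(g.1 1 0) * z + ↑(g.1 1 1))) * g.det_fin_two_eq_one

theorem mact_sub_mact (hz : mdenom g z ≠ 0) (ht : mdenom g t ≠ 0) :
    mact g z - mact g t = (z - t) / (mdenom g z * mdenom g t) := by
  have hdet := congrArg (fun x : ℝ => (x : ℂ)) g.det_fin_two_eq_one
  push_cast at hdet
  rw [mact, mact, div_sub_div _ _ hz ht]
  congr 1
  simp only [mdenom]
  linear_combination (z - t) * hdet

theorem log_mact_sub_mact (hz : 0 < z.im) (ht : t.im < 0) :
    log (mact g z - mact g t) = log (z - t) - log (mdenom g z) - logLHP (mdenom g t) := by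
  have hA := mdenom_ne_zero g hz.ne'
  have hB := mdenom_ne_zero g ht.ne
  apply log_eq_of_exp_eq
  · rw [exp_sub, exp_sub, exp_log (sub_ne_zero.mpr (ne_of_apply_ne im (by linarith))), exp_log hA,
      exp_logLHP hB, div_div, mact_sub_mact g hA hB]
  · have hw : 0 ≤ (mact g z - mact g t).im := by
      have := div_pos hz (normSq_pos.mpr hA)
      have := div_neg_of_neg_of_pos ht (normSq_pos.mpr hB)
      rw [sub_im, im_mact, im_mact]; linarith
    have hzt : 0 ≤ (z - t).im := by rw [sub_im]; linarith
    have hden := abs_arg_ofReal_mul_add_sub_lt_pi (g.1 1 0) (g.1 1 1) hz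
      (show 0 < (conj t).im by simpa using ht)
    rw [← mdenom, ← mdenom, ← conj_mdenom] at hden
    simp only [sub_im, log_im, logLHP_im]
    rw [abs_lt] at hden ⊢
    constructor <;> linarith [arg_nonneg_iff.mpr hw, arg_le_pi (mact g z - mact g t),
      arg_nonneg_iff.mpr hzt, arg_le_pi (z - t)]

theorem cpowLHP_mdenom_mul_cpow_mact_sub (s : ℂ) (hz : 0 < z.im) (ht : t.im < 0) :
    cpowLHP (mdenom g t) s * (mact g z - mact g t) ^ s = (z - t) ^ s * mdenom g z ^ (-s) := by
  have hA := mdenom_ne_zero g hz.ne'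
  have hB := mdenom_ne_zero g ht.ne
  have hzt : z - t ≠ 0 := sub_ne_zero.mpr (ne_of_apply_ne im (by linarith))
  have hw : mact g z - mact g t ≠ 0 := by
    rw [mact_sub_mact g hA hB]; exact div_ne_zero hzt (mul_ne_zero hA hB)
  rw [cpowLHP_eq_exp_logLHP hB, cpow_def_of_ne_zero hw, cpow_def_of_ne_zero hA,
    cpow_def_of_ne_zero hzt, ← exp_add, ← exp_add, log_mact_sub_mact g hz ht]
  ring_nf

end MobiusAction

/-- equivariance of the differential form
`ω_r(F;t,z) = (z-t)^(r-2) F z dz`:  `ω_r(F; ·, gz)|_{2-r} g = ω_r(F|_r g; ·, z)`,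
i.e. `(ct+d)^(r-2) (gz - gt)^(r-2) F(gz) d(gz) = (z-t)^(r-2) (cz+d)^(-r) F(gz) dz`,
with the argument conventions `arg(cz+d) ∈ (-π,π]` for `z ∈ ℍ` (principal branch) and
`arg(ct+d) ∈ [-π,π)` for `t ∈ ℍ⁻`, and `arg(z-t), arg(gz-gt) ∈ (-π/2, 3π/2)` (realized
by the principal branch since the imaginary parts are positive). -/
theorem omega_r_equivariance (r : ℂ) (F : ℂ → ℂ)
    (g : Matrix.SpecialLinearGroup (Fin 2) ℝ) (z t : ℂ)
    (hz : 0 < z.im) (ht : t.im < 0) :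
    cpowLHP (mdenom g t) (r - 2) * ((mact g z - mact g t) ^ (r - 2)) * F (mact g z) *
        (mdenom g z) ^ (-2 : ℤ) =
      ((z - t) ^ (r - 2)) * ((mdenom g z) ^ (-r) * F (mact g z)) := by
  have hweight : mdenom g z ^ (-(r - 2)) * mdenom g z ^ (-2 : ℤ) = mdenom g z ^ (-r) := by
    rw [← cpow_intCast, ← cpow_add _ _ (mdenom_ne_zero g hz.ne')]
    push_cast
    ring_nf
  rw [cpowLHP_mdenom_mul_cpow_mact_sub g _ hz ht, ← hweight]
  ring
end
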